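/- Let n ≥ 1 and let p_1, …, p_n be the n distinct complex roots of f_n. Then for each k ∈ {1,…,n}, (2/n)·∑_{j≠k} 1/(p_k − p_j) − 2/(p_k − 1) + 1/(n·p_k) = 0. -/

import Mathlib

/-!
`f_n = ₂F₁(-n, -n; 1; z)` satisfies the hypergeometric equation
`z (z - 1) f'' = ((2n - 1) z + 1) f' - n² f`. At a simple root `a = p_k` of `f_n = ∏ (z - p_j)`
one has `f''(a) = 2 f'(a) ∑_{j ≠ k} 1 / (a - p_j)` with `f'(a) ≠ 0`, so the equation becomes
`2 a (a - 1) ∑_{j ≠ k} 1 / (a - p_j) = (2n - 1) a + 1`, which is the claim multiplied by `n a (a - 1)`.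
-/

open Polynomial

/-- The polynomial `f_n(z) = ∑_{j=0}^n (binom(n,j))^2 z^j` with complex coefficients. -/
noncomputable def hyperPoly (n : ℕ) : Polynomial ℂ :=
  ∑ j ∈ Finset.range (n + 1), Polynomial.C ((n.choose j : ℂ) ^ 2) * Polynomial.X ^ j

open Finset Lagrange

theorem Nat.cast_choose_succ_mul {R : Type*} [CommRing R] (n k : ℕ) :
    (n.choose (k + 1) : R) * (k + 1) = n.choose k * (n - k) := by
  rcases le_or_gt k n with hkn | hnk
  · have h := congrArg (Nat.cast : ℕ → R) (Nat.choose_succ_right_eq n k)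
    push_cast [Nat.cast_sub hkn] at h
    exact h
  · simp [Nat.choose_eq_zero_of_lt hnk, Nat.choose_eq_zero_of_lt (hnk.trans k.lt_succ_self)]

theorem coeff_hyperPoly (n m : ℕ) : (hyperPoly n).coeff m = (n.choose m : ℂ) ^ 2 := by
  simp only [hyperPoly, finsetSum_coeff, coeff_C_mul_X_pow]
  rw [Finset.sum_ite_eq]
  split_ifs with h
  · rfl
  · simp [Nat.choose_eq_zero_of_lt (by simpa using h : n < m)]

theorem hyperPoly_ode (n : ℕ) :
    X * (X - 1) * derivative (derivative (hyperPoly n))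
      = (C (2 * n - 1 : ℂ) * X + 1) * derivative (hyperPoly n) - C ((n : ℂ) ^ 2) * hyperPoly n := by
  ext m
  rcases m with _ | _ | m
  · rw [coeff_sub, coeff_C_mul]
    simp [mul_coeff_zero, coeff_derivative, coeff_hyperPoly]
  · have h := Nat.cast_choose_succ_mul (R := ℂ) n 1
    simp only [coeff_sub, coeff_C_mul, mul_assoc, coeff_X_mul, sub_mul, add_mul, coeff_add, one_mul,
      mul_coeff_zero, coeff_X_zero, zero_mul, coeff_derivative, coeff_hyperPoly]
    push_cast at h ⊢
    linear_combination (-(n.choose 2 : ℂ) * 2 - n.choose 1 * (n - 1)) * h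
  · have h := Nat.cast_choose_succ_mul (R := ℂ) n (m + 2)
    simp only [coeff_sub, coeff_C_mul, mul_assoc, coeff_X_mul, sub_mul, add_mul, coeff_add, one_mul,
      coeff_derivative, coeff_hyperPoly]
    push_cast at h ⊢
    linear_combination (-(n.choose (m + 3) : ℂ) * (m + 3) - n.choose (m + 2) * (n - (m + 2))) * h

theorem eval_derivative_nodal_eq_mul_sum {F ι : Type*} [Field F] (s : Finset ι) (v : ι → F)
    {x : F} (hx : ∀ i ∈ s, x ≠ v i) :
    eval x (derivative (nodal s v)) = eval x (nodal s v) * ∑ i ∈ s, 1 / (x - v i) := by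
  classical
  rw [derivative_nodal, eval_finsetSum, Finset.mul_sum]
  refine Finset.sum_congr rfl fun i hi => ?_
  have := sub_ne_zero.2 (hx i hi)
  rw [eval_nodal, eval_nodal, ← Finset.mul_prod_erase s _ hi]
  field_simp

theorem eval_derivative_derivative_nodal_at_node {F ι : Type*} [Field F] [DecidableEq ι]
    {s : Finset ι} {v : ι → F} (hv : Set.InjOn v s) {i : ι} (hi : i ∈ s) :
    eval (v i) (derivative (derivative (nodal s v)))
      = 2 * eval (v i) (derivative (nodal s v)) * ∑ j ∈ s.erase i, 1 / (v i - v j) := by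
  have hne : ∀ j ∈ s.erase i, v i ≠ v j := fun j hj h =>
    (mem_erase.1 hj).1 (hv (mem_of_mem_erase hj) hi h.symm)
  rw [eval_nodal_derivative_eval_node_eq hi, mul_assoc, ← eval_derivative_nodal_eq_mul_sum _ _ hne,
    nodal_eq_mul_nodal_erase hi]
  simp [derivative_mul]
  ring

theorem stmt_7_general (n : ℕ)
    (p : Fin n → ℂ) (hp : Function.Injective p)
    (hroots : hyperPoly n = ∏ j, (Polynomial.X - Polynomial.C (p j)))
    (k : Fin n) :
    (2 / (n : ℂ)) * (∑ j ∈ Finset.univ.erase k, 1 / (p k - p j))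
      - 2 / (p k - 1) + 1 / ((n : ℂ) * p k) = 0 := by
  classical
  have hf : hyperPoly n = nodal univ p := hroots
  set S := ∑ j ∈ univ.erase k, 1 / (p k - p j)
  have hD : eval (p k) (derivative (nodal univ p)) ≠ 0 := by
    rw [eval_nodal_derivative_eval_node_eq (mem_univ k)]
    exact eval_nodal_not_at_node fun j hj h => (mem_erase.1 hj).1 (hp h).symm
  have hode : 2 * p k * (p k - 1) * S = (2 * n - 1) * p k + 1 := by
    have h := congrArg (eval (p k)) (hyperPoly_ode n)
    simp only [eval_mul, eval_sub, eval_add, eval_X, eval_C, eval_one, hf,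
      eval_derivative_derivative_nodal_at_node hp.injOn (mem_univ k),
      eval_nodal_at_node (mem_univ k)] at h
    apply mul_left_cancel₀ hD
    linear_combination h
  have hn : (n : ℂ) ≠ 0 := Nat.cast_ne_zero.2 k.pos.ne'
  have ha0 : p k ≠ 0 := fun h => by simp [h] at hode
  have ha1 : p k - 1 ≠ 0 := fun h => hn <| by
    rw [sub_eq_zero.1 h] at hode
    linear_combination -hode / 2
  field_simp
  linear_combination hode

/-- Let `n ≥ 1` and let `p 1, …, p n` be the `n` distinct complex roots of `f_n`.
Then for each `k`, `(2/n)·∑_{j≠k} 1/(p_k − p_j) − 2/(p_k − 1) + 1/(n·p_k) = 0`. -/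
theorem stmt_7 (n : ℕ) (hn : 1 ≤ n)
    (p : Fin n → ℂ) (hp : Function.Injective p)
    (hroots : hyperPoly n = ∏ j, (Polynomial.X - Polynomial.C (p j)))
    (k : Fin n) :
    (2 / (n : ℂ)) * (∑ j ∈ Finset.univ.erase k, 1 / (p k - p j))
      - 2 / (p k - 1) + 1 / ((n : ℂ) * p k) = 0 :=
  stmt_7_general n p hp hroots k
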